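/- Let t ∈ ℝ, let I ⊆ ℝ be an open interval, and let F, C, s : ℝ → ℝ be infinitely differentiable with F(z) > 0 and C(z) > 0 for all z ∈ I. Define on I: 𝓕₁ = 24·(F·(√C)')' + 4√C·(F'' + (1/2)F − 2) + s·C^{3/2}; 𝓕₂ = (8/3)·((1/4)F'''' − (5/4)F'' + F − 1) + t·s·C^{3/2}·((C^{−1/2})'' − (1/4)C^{−1/2}) + (t/2)·(C/F)·F'·s' + t·C'·s'; and 𝓣 = 16·𝓑(F) − 18t·F·C'·s' − 6t·C·F'·s' − (3/4)·t·s·C^{−1}·(C²·(−16 + 4F + C·s) + 12F·(C')² + 8C·C'·F'), where 𝓑(F) = (−(1/2)F'' + (3/2)F' + F − 1)·((1/2)F'' − (3/2)F' + F − 1) + F'·((1/2)F''' − (3/2)F'' + F'). Then for every z ∈ I, 𝓣'(z) = (−3t/(2√(C(z))))·(s·C)'(z)·𝓕₁(z) + 12F'(z)·𝓕₂(z) − 6t·(3C'(z)/C(z) + F'(z)/F(z))·(C·F·s')'(z). -/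

import Mathlib

/-! The identity is pointwise. Its `t`-free part is the fact that `𝓑(F)` is a first integral of
the fourth-order operator in `𝓕₂`: `𝓑(F)' = 2F'·((1/4)F'''' − (5/4)F'' + F − 1)`, and
`16·2 = 12·(8/3)`. For the rest, expand `𝓣'` by the product rule and the derivatives of `√C` and
`C^{−1/2}` in terms of `C'`, `C''`; both sides become rational in `√C` and the jets of `F`, `C`,
`s`, and they agree once `C = (√C)²`. -/

open Real

/-- The quadratic third-order operator
`𝓑(F) = (−(1/2)F'' + (3/2)F' + F − 1)·((1/2)F'' − (3/2)F' + F − 1)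
        + F'·((1/2)F''' − (3/2)F'' + F')`. -/
noncomputable def Bop (F : ℝ → ℝ) (z : ℝ) : ℝ :=
  (-(1/2) * iteratedDeriv 2 F z + (3/2) * deriv F z + F z - 1) *
      ((1/2) * iteratedDeriv 2 F z - (3/2) * deriv F z + F z - 1)
    + deriv F z * ((1/2) * iteratedDeriv 3 F z - (3/2) * iteratedDeriv 2 F z + deriv F z)

/-- `𝓕₁ = 24(F·(√C)')' + 4√C·(F'' + (1/2)F − 2) + s·C^{3/2}` (the scalar curvature
equation). -/
noncomputable def Fone (F C s : ℝ → ℝ) (z : ℝ) : ℝ :=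
  24 * deriv (fun w => F w * deriv (fun u => Real.sqrt (C u)) w) z
    + 4 * Real.sqrt (C z) * (iteratedDeriv 2 F z + (1/2) * F z - 2)
    + s z * (C z) ^ ((3:ℝ)/2)

/-- `𝓕₂ = (8/3)((1/4)F'''' − (5/4)F'' + F − 1)
      + t·s·C^{3/2}·((C^{−1/2})'' − (1/4)C^{−1/2}) + (t/2)(C/F)F's' + tC's'`. -/
noncomputable def Ftwo (t : ℝ) (F C s : ℝ → ℝ) (z : ℝ) : ℝ :=
  (8/3) * ((1/4) * iteratedDeriv 4 F z - (5/4) * iteratedDeriv 2 F z + F z - 1)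
    + t * s z * (C z) ^ ((3:ℝ)/2) *
        (deriv (deriv (fun u => (Real.sqrt (C u))⁻¹)) z - (1/4) * (Real.sqrt (C z))⁻¹)
    + (t/2) * (C z / F z) * deriv F z * deriv s z
    + t * deriv C z * deriv s z

/-- `𝓣 = 16𝓑(F) − 18tFC's' − 6tCF's'
      − (3/4)tsC⁻¹·(C²(−16 + 4F + Cs) + 12F(C')² + 8CC'F')`. -/
noncomputable def Tcal (t : ℝ) (F C s : ℝ → ℝ) (z : ℝ) : ℝ :=
  16 * Bop F z - 18 * t * F z * deriv C z * deriv s z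
    - 6 * t * C z * deriv F z * deriv s z
    - (3/4) * t * s z * (C z)⁻¹ *
        ((C z)^2 * (-16 + 4 * F z + C z * s z) + 12 * F z * (deriv C z)^2
          + 8 * C z * deriv C z * deriv F z)

open Filter Topology

section

variable {f : ℝ → ℝ} {z : ℝ}

theorem ContDiff.hasDerivAt_iteratedDeriv {n : WithTop ℕ∞} (hf : ContDiff ℝ n f) {m : ℕ}
    (hm : m < n) (z : ℝ) : HasDerivAt (iteratedDeriv m f) (iteratedDeriv (m + 1) f z) z := by
  rw [iteratedDeriv_succ]
  exact (hf.differentiable_iteratedDeriv m hm z).hasDerivAt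

theorem ContDiff.hasDerivAt_deriv (hf : ContDiff ℝ 2 f) (z : ℝ) :
    HasDerivAt (deriv f) (iteratedDeriv 2 f z) z := by
  simpa only [iteratedDeriv_one] using hf.hasDerivAt_iteratedDeriv (m := 1) (by norm_num) z

theorem hasDerivAt_deriv_sqrt_comp (hf : ContDiff ℝ 2 f) (hz : 0 < f z) :
    HasDerivAt (deriv fun u => √(f u))
      (iteratedDeriv 2 f z / (2 * √(f z)) - deriv f z ^ 2 / (4 * √(f z) ^ 3)) z := by
  have hd : Differentiable ℝ f := hf.differentiable (by norm_num)
  have hr : √(f z) ≠ 0 := (sqrt_pos.2 hz).ne'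
  have heq : (deriv fun u => √(f u)) =ᶠ[𝓝 z] fun u => deriv f u / (2 * √(f u)) := by
    filter_upwards [hd.continuous.continuousAt.eventually_ne hz.ne'] with u hu
    exact deriv_sqrt (hd u) hu
  refine HasDerivAt.congr_of_eventuallyEq ?_ heq
  refine ((hf.hasDerivAt_deriv z).fun_div (((hd z).hasDerivAt.sqrt hz.ne').const_mul 2)
    (mul_ne_zero two_ne_zero hr)).congr_deriv ?_
  field_simp
  rw [sq_sqrt hz.le]
  ring

theorem hasDerivAt_deriv_inv_sqrt_comp (hf : ContDiff ℝ 2 f) (hz : 0 < f z) :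
    HasDerivAt (deriv fun u => (√(f u))⁻¹)
      (3 * deriv f z ^ 2 / (4 * √(f z) ^ 5) - iteratedDeriv 2 f z / (2 * √(f z) ^ 3)) z := by
  have hd : Differentiable ℝ f := hf.differentiable (by norm_num)
  have hr : √(f z) ≠ 0 := (sqrt_pos.2 hz).ne'
  have heq : (deriv fun u => (√(f u))⁻¹) =ᶠ[𝓝 z] fun u => -deriv f u / (2 * √(f u) ^ 3) := by
    filter_upwards [(hd.continuous.tendsto z).eventually_const_lt hz] with u hu
    refine ((((hd u).hasDerivAt.sqrt hu.ne').fun_inv (sqrt_pos.2 hu).ne').deriv).trans ?_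
    field_simp
  refine HasDerivAt.congr_of_eventuallyEq ?_ heq
  refine ((hf.hasDerivAt_deriv z).fun_neg.fun_div
    ((((hd z).hasDerivAt.sqrt hz.ne').fun_pow 3).const_mul 2)
    (mul_ne_zero two_ne_zero (pow_ne_zero 3 hr))).congr_deriv ?_
  field_simp
  ring

end

theorem hasDerivAt_Bop {F : ℝ → ℝ} (hF : ContDiff ℝ 4 F) (z : ℝ) :
    HasDerivAt (Bop F)
      (2 * deriv F z * ((1/4) * iteratedDeriv 4 F z - (5/4) * iteratedDeriv 2 F z + F z - 1))
      z := by
  have d0 : HasDerivAt F (deriv F z) z := (hF.differentiable (by norm_num) z).hasDerivAt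
  have d1 := (hF.of_le (by norm_num)).hasDerivAt_deriv z
  have d2 := hF.hasDerivAt_iteratedDeriv (m := 2) (by norm_num) z
  have d3 := hF.hasDerivAt_iteratedDeriv (m := 3) (by norm_num) z
  refine ((((((d2.const_mul (-(1/2))).fun_add (d1.const_mul (3/2))).fun_add d0).sub_const 1).fun_mul
      ((((d2.const_mul (1/2)).fun_sub (d1.const_mul (3/2))).fun_add d0).sub_const 1)).fun_add
      (d1.fun_mul (((d3.const_mul (1/2)).fun_sub (d2.const_mul (3/2))).fun_add d1))).congr_deriv ?_
  ring

theorem Bt_flat_constant_of_motion_general (t : ℝ) (I : Set ℝ)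
    (F C s : ℝ → ℝ)
    (hF : ContDiff ℝ (⊤ : ℕ∞) F) (hC : ContDiff ℝ (⊤ : ℕ∞) C)
    (hs : ContDiff ℝ (⊤ : ℕ∞) s)
    (hFpos : ∀ z ∈ I, 0 < F z) (hCpos : ∀ z ∈ I, 0 < C z) :
    ∀ z ∈ I,
      deriv (Tcal t F C s) z =
        (-3 * t / (2 * Real.sqrt (C z))) * deriv (fun w => s w * C w) z * Fone F C s z
          + 12 * deriv F z * Ftwo t F C s z
          - 6 * t * (3 * deriv C z / C z + deriv F z / F z) *
              deriv (fun w => C w * F w * deriv s w) z := by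
  intro z hz
  have hCz := hCpos z hz
  have hFz := (hFpos z hz).ne'
  have hF4 : ContDiff ℝ 4 F := hF.of_le (WithTop.coe_le_coe.2 le_top)
  have hC2 : ContDiff ℝ 2 C := hC.of_le (WithTop.coe_le_coe.2 le_top)
  have hs2 : ContDiff ℝ 2 s := hs.of_le (WithTop.coe_le_coe.2 le_top)
  have dF : HasDerivAt F (deriv F z) z := (hF4.differentiable (by norm_num) z).hasDerivAt
  have dC : HasDerivAt C (deriv C z) z := (hC2.differentiable (by norm_num) z).hasDerivAt
  have ds : HasDerivAt s (deriv s z) z := (hs2.differentiable (by norm_num) z).hasDerivAt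
  have dF' := (hF4.of_le (by norm_num)).hasDerivAt_deriv z
  have dC' := hC2.hasDerivAt_deriv z
  have ds' := hs2.hasDerivAt_deriv z
  have hT : HasDerivAt (Tcal t F C s) _ z :=
    ((((hasDerivAt_Bop hF4 z).const_mul 16).fun_sub
      (((dF.const_mul (18 * t)).fun_mul dC').fun_mul ds')).fun_sub
      (((dC.const_mul (6 * t)).fun_mul dF').fun_mul ds')).fun_sub
      (((ds.const_mul ((3/4) * t)).fun_mul (dC.fun_inv hCz.ne')).fun_mul
        ((((dC.fun_pow 2).fun_mul
          (((dF.const_mul 4).const_add (-16)).fun_add (dC.fun_mul ds))).fun_add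
          ((dF.const_mul 12).fun_mul (dC'.fun_pow 2))).fun_add
          (((dC.const_mul 8).fun_mul dC').fun_mul dF')))
  rw [hT.deriv, (ds.fun_mul dC).deriv, ((dC.fun_mul dF).fun_mul ds').deriv, Fone, Ftwo,
    (dF.fun_mul (hasDerivAt_deriv_sqrt_comp hC2 hCz)).deriv,
    deriv_sqrt dC.differentiableAt hCz.ne',
    (hasDerivAt_deriv_inv_sqrt_comp hC2 hCz).deriv, rpow_div_two_eq_sqrt 3 hCz.le, rpow_ofNat]
  have hr : √(C z) ≠ 0 := (sqrt_pos.2 hCz).ne'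
  have hCr : C z = √(C z) ^ 2 := (sq_sqrt hCz.le).symm
  generalize √(C z) = r at hr hCr ⊢
  rw [hCr]
  field_simp
  ring

/-- the constant-of-motion identity for the `Bᵗ`-flat system:
`𝓣' = (−3t/(2√C))·(sC)'·𝓕₁ + 12F'·𝓕₂ − 6t·(3C'/C + F'/F)·(CFs')'`. -/
theorem Bt_flat_constant_of_motion (t : ℝ) (I : Set ℝ)
    (hIopen : IsOpen I) (hIconn : IsPreconnected I)
    (F C s : ℝ → ℝ)
    (hF : ContDiff ℝ (⊤ : ℕ∞) F) (hC : ContDiff ℝ (⊤ : ℕ∞) C)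
    (hs : ContDiff ℝ (⊤ : ℕ∞) s)
    (hFpos : ∀ z ∈ I, 0 < F z) (hCpos : ∀ z ∈ I, 0 < C z) :
    ∀ z ∈ I,
      deriv (Tcal t F C s) z =
        (-3 * t / (2 * Real.sqrt (C z))) * deriv (fun w => s w * C w) z * Fone F C s z
          + 12 * deriv F z * Ftwo t F C s z
          - 6 * t * (3 * deriv C z / C z + deriv F z / F z) *
              deriv (fun w => C w * F w * deriv s w) z :=
  Bt_flat_constant_of_motion_general t I F C s hF hC hs hFpos hCpos
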